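/- arXiv:2009.13052 — 5 statements merged into one kernel-verified Lean document; each statement's English description precedes it below -/
import Mathlib

section
/- Assume that all capped orbits have pairwise distinct actions, i.e. a_i − a_j ∉ λ₀·ℤ whenever i ≠ j in Fin n. Then a finite family (ξ_j) of nonzero vectors of C is orthogonal if and only if the actions A(ξ_j) are pairwise distinct modulo λ₀·ℤ, i.e. A(ξ_j) − A(ξ_{j'}) ∉ λ₀·ℤ for all j ≠ j'. -/
/-!  Common setup: `Λ := LaurentSeries (ZMod 2)`, `C := Fin n → Λ`, the action
functional `A`, orthogonality, capped orbits, the pairing `⟨d x̄, ȳ⟩`,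
Floer-type differentials and singular decompositions. -/

noncomputable section

/-- The Novikov field `Λ = 𝔽₂((q))`, realized as formal Laurent series over `ZMod 2`. -/
abbrev Lam : Type := LaurentSeries (ZMod 2)

open Classical in
/-- The action `A : C → ℝ ∪ {+∞}`: `A 0 = ⊤` and for `ξ ≠ 0`,
`A ξ = min { a i + λ₀ • ord (ξ i) | ξ i ≠ 0 }`. -/
def actA (n : ℕ) (lam0 : ℝ) (a : Fin n → ℝ) (xi : Fin n → Lam) : WithTop ℝ :=
  Finset.univ.inf fun i : Fin n =>
    if xi i = 0 then (⊤ : WithTop ℝ)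
    else ((a i + lam0 * ((xi i).order : ℝ) : ℝ) : WithTop ℝ)

/-- A finite family `(ξ j)` of vectors of `C` is orthogonal if
`A (∑ λ_j • ξ_j) = min_j A (λ_j • ξ_j)` for all coefficients `λ_j ∈ Λ`. -/
def IsOrthogonalFamily (n : ℕ) (lam0 : ℝ) (a : Fin n → ℝ) {ι : Type} [Fintype ι]
    (xi : ι → (Fin n → Lam)) : Prop :=
  ∀ c : ι → Lam,
    actA n lam0 a (∑ j, c j • xi j) = Finset.univ.inf fun j => actA n lam0 a (c j • xi j)

/-- The capped orbit `q^k eᵢ`. -/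
def cappedOrbit (n : ℕ) (i : Fin n) (k : ℤ) : Fin n → Lam :=
  Pi.single i (HahnSeries.single k 1)

/-- `⟨d x̄, ȳ⟩ ∈ 𝔽₂` for `x̄ = q^k eᵢ` and `ȳ = q^l eⱼ`: the `(l - k)`-th Laurent
coefficient of the `j`-th component of `d eᵢ`. -/
def pairing (n : ℕ) (d : (Fin n → Lam) →ₗ[Lam] (Fin n → Lam)) (i j : Fin n) (k l : ℤ) :
    ZMod 2 :=
  ((d (Pi.single i 1)) j).coeff (l - k)

/-- The set of arrow lengths `A ȳ - A x̄` over pairs of capped orbits with `⟨d x̄, ȳ⟩ = 1`. -/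
def arrowLengths (n : ℕ) (lam0 : ℝ) (a : Fin n → ℝ)
    (d : (Fin n → Lam) →ₗ[Lam] (Fin n → Lam)) : Set ℝ :=
  {t : ℝ | ∃ (i j : Fin n) (k l : ℤ),
    pairing n d i j k l = 1 ∧ t = (a j + lam0 * l) - (a i + lam0 * k)}

/-- The set of values `A (d ξ) - A ξ` over `ξ ∈ C` with `d ξ ≠ 0`. -/
def actionGaps (n : ℕ) (lam0 : ℝ) (a : Fin n → ℝ)
    (d : (Fin n → Lam) →ₗ[Lam] (Fin n → Lam)) : Set ℝ :=
  {t : ℝ | ∃ xi : Fin n → Lam, d xi ≠ 0 ∧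
    actA n lam0 a (d xi) = actA n lam0 a xi + (t : WithTop ℝ)}

/-- A Floer-type differential on `C`: a `Λ`-linear map squaring to zero that strictly
increases the action. -/
def IsFloerDifferential (n : ℕ) (lam0 : ℝ) (a : Fin n → ℝ)
    (d : (Fin n → Lam) →ₗ[Lam] (Fin n → Lam)) : Prop :=
  d ∘ₗ d = 0 ∧
    ∀ xi : Fin n → Lam, xi ≠ 0 → d xi ≠ 0 → actA n lam0 a xi < actA n lam0 a (d xi)

/-- A singular decomposition of `(C, d)`: `p + 2r = n` and an orthogonal basis
`α₁,…,α_p, η₁,…,η_r, γ₁,…,γ_r` of `C` over `Λ` with `d αᵢ = 0` and `d ηⱼ = γⱼ`. -/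
def IsSingularDecomposition (n : ℕ) (lam0 : ℝ) (a : Fin n → ℝ)
    (d : (Fin n → Lam) →ₗ[Lam] (Fin n → Lam)) (p r : ℕ)
    (alpha : Fin p → (Fin n → Lam)) (eta gamma : Fin r → (Fin n → Lam)) : Prop :=
  p + 2 * r = n ∧
  IsOrthogonalFamily n lam0 a (Sum.elim alpha (Sum.elim eta gamma)) ∧
  LinearIndependent Lam (Sum.elim alpha (Sum.elim eta gamma)) ∧
  Submodule.span Lam (Set.range (Sum.elim alpha (Sum.elim eta gamma))) = ⊤ ∧
  (∀ i, d (alpha i) = 0) ∧ (∀ j, d (eta j) = gamma j)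

/-- The set of bars `A (γ j) - A (η j)` of a singular decomposition; its infimum is the
minimal bar `β_min` when `r ≥ 1`. -/
def barSet (n : ℕ) (lam0 : ℝ) (a : Fin n → ℝ) {r : ℕ}
    (eta gamma : Fin r → (Fin n → Lam)) : Set ℝ :=
  {t : ℝ | ∃ j : Fin r, actA n lam0 a (gamma j) = actA n lam0 a (eta j) + (t : WithTop ℝ)}

end

/-!
Write `A ξ = min_i v_i (ξ_i)` with `v_i x = a_i + λ₀ ord x`. Each `v_i` is a shifted
non-archimedean valuation, so `A (ξ + η) ≥ min (A ξ) (A η)`, with equality when `A ξ ≠ A η`,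
and `A (c ξ) = A ξ + λ₀ ord c`. Hence if the `A ξ_j` are distinct modulo `λ₀ℤ`, the nonzero
terms of any `∑ c_j ξ_j` have distinct actions and the family is orthogonal.

Conversely, when the capped orbits have distinct actions, the value `a_i + λ₀ m` determines
both the coordinate `i` and the order `m` at which `A ξ` is attained. So if `A ξ = A η`, the
leading terms of `ξ` and `η` sit in the same coordinate and degree, with coefficient `1 ∈ 𝔽₂`,
and cancel: `A (ξ + η) > A ξ`. For `A ξ_j = A ξ_{j'} + λ₀ k` this, applied to `ξ_j + q^k ξ_{j'}`,
contradicts orthogonality.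
-/

open Finset

lemma WithTop.eq_add_coe_sub_of_add_coe_eq {u v : WithTop ℝ} {r s : ℝ}
    (h : u + (r : WithTop ℝ) = v + (s : WithTop ℝ)) : u = v + ((s - r : ℝ) : WithTop ℝ) := by
  calc u = u + (r : WithTop ℝ) + ((-r : ℝ) : WithTop ℝ) := by
        rw [add_assoc, ← WithTop.coe_add, add_neg_cancel, WithTop.coe_zero, add_zero]
    _ = v + ((s - r : ℝ) : WithTop ℝ) := by
        rw [h, add_assoc, ← WithTop.coe_add, sub_eq_add_neg]

section coordAct

variable {R : Type*} {lam0 b : ℝ}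

open Classical in
noncomputable def coordAct [Zero R] (lam0 b : ℝ) (x : LaurentSeries R) : WithTop ℝ :=
  if x = 0 then ⊤ else ((b + lam0 * (x.order : ℝ) : ℝ) : WithTop ℝ)

@[simp]
lemma coordAct_zero [Zero R] : coordAct lam0 b (0 : LaurentSeries R) = ⊤ := by
  simp [coordAct]

lemma coordAct_of_ne_zero [Zero R] {x : LaurentSeries R} (hx : x ≠ 0) :
    coordAct lam0 b x = ((b + lam0 * (x.order : ℝ) : ℝ) : WithTop ℝ) := by
  simp [coordAct, hx]

@[simp]
lemma coordAct_eq_top_iff [Zero R] {x : LaurentSeries R} : coordAct lam0 b x = ⊤ ↔ x = 0 := by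
  unfold coordAct
  split_ifs with hx
  · simp [hx]
  · exact iff_of_false WithTop.coe_ne_top hx

@[simp]
lemma coordAct_neg [AddGroup R] (x : LaurentSeries R) :
    coordAct lam0 b (-x) = coordAct lam0 b x := by
  by_cases hx : x = 0
  · simp [hx]
  · rw [coordAct_of_ne_zero hx, coordAct_of_ne_zero (neg_ne_zero.mpr hx), HahnSeries.order_neg]

lemma min_coordAct_le_coordAct_add [AddMonoid R] (hlam0 : 0 ≤ lam0) (x y : LaurentSeries R) :
    min (coordAct lam0 b x) (coordAct lam0 b y) ≤ coordAct lam0 b (x + y) := by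
  by_cases hx : x = 0
  · simp [hx]
  by_cases hy : y = 0
  · simp [hy]
  by_cases hxy : x + y = 0
  · simp [hxy]
  have hord : (min x.order y.order : ℝ) ≤ (x + y).order := by
    exact_mod_cast HahnSeries.min_order_le_order_add hxy
  rw [coordAct_of_ne_zero hx, coordAct_of_ne_zero hy, coordAct_of_ne_zero hxy,
    ← WithTop.coe_min, WithTop.coe_le_coe, min_add_add_left, ← mul_min_of_nonneg _ _ hlam0]
  gcongr

lemma coordAct_mul [Ring R] [NoZeroDivisors R] {c : LaurentSeries R} (hc : c ≠ 0)
    (x : LaurentSeries R) :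
    coordAct lam0 b (c * x) = coordAct lam0 b x + ((lam0 * (c.order : ℝ) : ℝ) : WithTop ℝ) := by
  by_cases hx : x = 0
  · simp [hx]
  rw [coordAct_of_ne_zero (mul_ne_zero hc hx), coordAct_of_ne_zero hx,
    HahnSeries.order_mul hc hx, ← WithTop.coe_add]
  congr 1
  push_cast
  ring

lemma coordAct_lt_coordAct_add_of_eq (hlam0 : 0 < lam0) {x y : LaurentSeries (ZMod 2)}
    (hx : x ≠ 0) (h : coordAct lam0 b x = coordAct lam0 b y) :
    coordAct lam0 b x < coordAct lam0 b (x + y) := by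
  have hy : y ≠ 0 := by
    rintro rfl
    exact hx (coordAct_eq_top_iff.mp (h.trans coordAct_zero))
  have hord : x.order = y.order := by
    rw [coordAct_of_ne_zero hx, coordAct_of_ne_zero hy, WithTop.coe_eq_coe] at h
    exact_mod_cast mul_left_cancel₀ hlam0.ne' (add_left_cancel h)
  by_cases hxy : x + y = 0
  · rw [hxy, coordAct_zero, coordAct_of_ne_zero hx]
    exact WithTop.coe_lt_top _
  have hcancel : (x + y).coeff x.order = 0 := by
    have hlead : ∀ u : ZMod 2, u ≠ 0 → u = 1 := by decide
    rw [HahnSeries.coeff_add, hlead _ (mt HahnSeries.coeff_order_eq_zero.mp hx), hord,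
      hlead _ (mt HahnSeries.coeff_order_eq_zero.mp hy)]
    decide
  have hlt : x.order < (x + y).order := by
    refine lt_of_le_of_ne ?_ fun he => hxy (HahnSeries.coeff_order_eq_zero.mp (he ▸ hcancel))
    simpa [hord] using HahnSeries.min_order_le_order_add hxy
  rw [coordAct_of_ne_zero hx, coordAct_of_ne_zero hxy, WithTop.coe_lt_coe]
  gcongr

end coordAct

section actA

variable {n : ℕ} {lam0 : ℝ} {a : Fin n → ℝ}

lemma actA_eq_inf_coordAct (xi : Fin n → Lam) :
    actA n lam0 a xi = univ.inf fun i => coordAct lam0 (a i) (xi i) :=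
  rfl

lemma actA_le_coordAct (xi : Fin n → Lam) (i : Fin n) :
    actA n lam0 a xi ≤ coordAct lam0 (a i) (xi i) := by
  rw [actA_eq_inf_coordAct]
  exact inf_le (mem_univ i)

@[simp]
lemma actA_eq_top_iff {xi : Fin n → Lam} : actA n lam0 a xi = ⊤ ↔ xi = 0 := by
  simp [actA_eq_inf_coordAct, funext_iff]

@[simp]
lemma actA_zero : actA n lam0 a 0 = ⊤ :=
  actA_eq_top_iff.mpr rfl

lemma exists_actA_eq_coordAct {xi : Fin n → Lam} (hxi : xi ≠ 0) :
    ∃ i, actA n lam0 a xi = coordAct lam0 (a i) (xi i) := by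
  obtain ⟨i, -⟩ := Function.ne_iff.mp hxi
  obtain ⟨j, -, hj⟩ := exists_mem_eq_inf univ ⟨i, mem_univ i⟩ fun i => coordAct lam0 (a i) (xi i)
  exact ⟨j, by rw [actA_eq_inf_coordAct, hj]⟩

lemma min_actA_le_actA_add (hlam0 : 0 ≤ lam0) (x y : Fin n → Lam) :
    min (actA n lam0 a x) (actA n lam0 a y) ≤ actA n lam0 a (x + y) := by
  rw [actA_eq_inf_coordAct (x + y)]
  refine Finset.le_inf fun i _ => ?_
  calc min (actA n lam0 a x) (actA n lam0 a y)
      ≤ min (coordAct lam0 (a i) (x i)) (coordAct lam0 (a i) (y i)) :=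
        min_le_min (actA_le_coordAct x i) (actA_le_coordAct y i)
    _ ≤ coordAct lam0 (a i) ((x + y) i) := min_coordAct_le_coordAct_add hlam0 _ _

@[simp]
lemma actA_neg (x : Fin n → Lam) : actA n lam0 a (-x) = actA n lam0 a x := by
  simp [actA_eq_inf_coordAct]

lemma actA_add_eq_left_of_lt (hlam0 : 0 ≤ lam0) {x y : Fin n → Lam}
    (h : actA n lam0 a x < actA n lam0 a y) : actA n lam0 a (x + y) = actA n lam0 a x := by
  refine le_antisymm ?_ (min_eq_left h.le ▸ min_actA_le_actA_add hlam0 x y)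
  have hx := min_actA_le_actA_add (a := a) hlam0 (x + y) (-y)
  rw [actA_neg, add_neg_cancel_right] at hx
  exact (min_le_iff.mp hx).resolve_right h.not_ge

lemma actA_add_eq_min_of_ne (hlam0 : 0 ≤ lam0) {x y : Fin n → Lam}
    (h : actA n lam0 a x ≠ actA n lam0 a y) :
    actA n lam0 a (x + y) = min (actA n lam0 a x) (actA n lam0 a y) := by
  rcases h.lt_or_gt with hxy | hyx
  · rw [actA_add_eq_left_of_lt hlam0 hxy, min_eq_left hxy.le]
  · rw [add_comm, actA_add_eq_left_of_lt hlam0 hyx, min_eq_right hyx.le]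

lemma actA_sum_eq_inf (hlam0 : 0 ≤ lam0) {ι : Type*} (s : Finset ι) (η : ι → Fin n → Lam)
    (hd : ∀ j ∈ s, ∀ j' ∈ s, j ≠ j' → actA n lam0 a (η j) = actA n lam0 a (η j') → η j = 0) :
    actA n lam0 a (∑ j ∈ s, η j) = s.inf fun j => actA n lam0 a (η j) := by
  induction s using Finset.cons_induction with
  | empty => simp
  | cons j s hjs ih =>
    have ih := ih fun j₁ h₁ j₂ h₂ => hd j₁ (mem_cons_of_mem h₁) j₂ (mem_cons_of_mem h₂)
    rw [sum_cons, inf_cons, ← ih]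
    by_cases hj : η j = 0
    · simp [hj]
    refine actA_add_eq_min_of_ne hlam0 fun heq => hj ?_
    have hne : s.Nonempty := by
      by_contra hs
      simp [not_nonempty_iff_eq_empty.mp hs, hj] at heq
    obtain ⟨j', hj', hinf⟩ := exists_mem_eq_inf s hne fun j => actA n lam0 a (η j)
    refine hd j (mem_cons_self j s) j' (mem_cons_of_mem hj') (fun h => hjs (h ▸ hj')) ?_
    rw [heq, ih, hinf]

lemma actA_smul {c : Lam} (hc : c ≠ 0) (xi : Fin n → Lam) :
    actA n lam0 a (c • xi) = actA n lam0 a xi + ((lam0 * (c.order : ℝ) : ℝ) : WithTop ℝ) := by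
  rw [actA_eq_inf_coordAct, actA_eq_inf_coordAct,
    apply_inf_eq_inf_comp_of_linearOrder (· + _) (fun _ _ h => add_le_add_left h _) (top_add _)]
  exact inf_congr rfl fun i _ => coordAct_mul hc (xi i)

lemma cappedAction_injective (hlam0 : lam0 ≠ 0)
    (hdist : ∀ i j : Fin n, i ≠ j → ∀ k : ℤ, a i - a j ≠ lam0 * k) :
    Function.Injective fun p : Fin n × ℤ => a p.1 + lam0 * p.2 := by
  rintro ⟨i, k⟩ ⟨j, l⟩ h
  dsimp only at h
  obtain rfl : i = j := by
    by_contra hij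
    exact hdist i j hij (l - k) (by push_cast; linarith)
  have hkl : (k : ℝ) = l := mul_left_cancel₀ hlam0 (add_left_cancel h)
  exact Prod.ext rfl (by exact_mod_cast hkl)

lemma eq_of_coordAct_eq (hinj : Function.Injective fun p : Fin n × ℤ => a p.1 + lam0 * p.2)
    {i j : Fin n} {x y : Lam} (hx : x ≠ 0)
    (h : coordAct lam0 (a i) x = coordAct lam0 (a j) y) : i = j := by
  have hy : y ≠ 0 := by
    rintro rfl
    exact hx (coordAct_eq_top_iff.mp (h.trans coordAct_zero))
  rw [coordAct_of_ne_zero hx, coordAct_of_ne_zero hy, WithTop.coe_eq_coe] at h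
  exact congrArg Prod.fst (hinj (a₁ := (i, x.order)) (a₂ := (j, y.order)) h)

lemma actA_lt_actA_add_of_eq (hlam0 : 0 < lam0)
    (hinj : Function.Injective fun p : Fin n × ℤ => a p.1 + lam0 * p.2)
    {x y : Fin n → Lam} (hx : x ≠ 0) (h : actA n lam0 a x = actA n lam0 a y) :
    actA n lam0 a x < actA n lam0 a (x + y) := by
  have hy : y ≠ 0 := by
    rintro rfl
    exact hx (actA_eq_top_iff.mp (h.trans actA_zero))
  obtain ⟨i, hi⟩ := exists_actA_eq_coordAct (lam0 := lam0) (a := a) hx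
  obtain ⟨i', hi'⟩ := exists_actA_eq_coordAct (lam0 := lam0) (a := a) hy
  have hxi : x i ≠ 0 := fun h0 => hx (actA_eq_top_iff.mp (by rw [hi, h0, coordAct_zero]))
  obtain rfl : i = i' := eq_of_coordAct_eq hinj hxi (hi.symm.trans (h.trans hi'))
  have hgt : ∀ z : Fin n → Lam, actA n lam0 a z = actA n lam0 a x →
      ∀ b ≠ i, actA n lam0 a x < coordAct lam0 (a b) (z b) := by
    intro z hz b hb
    refine lt_of_le_of_ne (by rw [← hz]; exact actA_le_coordAct z b) fun he => hb ?_
    exact (eq_of_coordAct_eq hinj hxi (hi.symm.trans he)).symm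
  refine (actA_eq_inf_coordAct (x + y)).symm ▸
    (Finset.lt_inf_iff (lt_top_iff_ne_top.mpr (mt actA_eq_top_iff.mp hx))).mpr fun b _ => ?_
  by_cases hb : b = i
  · subst hb
    rw [hi]
    exact coordAct_lt_coordAct_add_of_eq hlam0 hxi (hi.symm.trans (h.trans hi'))
  · calc actA n lam0 a x < min (coordAct lam0 (a b) (x b)) (coordAct lam0 (a b) (y b)) :=
          lt_min (hgt x rfl b hb) (hgt y h.symm b hb)
      _ ≤ coordAct lam0 (a b) ((x + y) b) := min_coordAct_le_coordAct_add hlam0.le _ _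

variable {ι : Type} [Fintype ι] {xi : ι → Fin n → Lam}

lemma IsOrthogonalFamily.actA_smul_add_smul (hO : IsOrthogonalFamily n lam0 a xi) {j j' : ι}
    (hjj' : j ≠ j') (c c' : Lam) :
    actA n lam0 a (c • xi j + c' • xi j') =
      min (actA n lam0 a (c • xi j)) (actA n lam0 a (c' • xi j')) := by
  classical
  set d : ι → Lam := Pi.single j c + Pi.single j' c'
  have hd : ∀ t, d t • xi t = if t = j then c • xi j else if t = j' then c' • xi j' else 0 := by
    intro t
    by_cases ht : t = j
    · subst ht; simp [d, hjj']
    by_cases ht' : t = j'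
    · subst ht'; simp [d, ht]
    simp [d, ht, ht']
  have hsum : ∑ t, d t • xi t = c • xi j + c' • xi j' := by
    rw [Fintype.sum_eq_add j j' hjj' fun t ht => by simp [hd, ht.1, ht.2]]
    simp [hd, hjj'.symm]
  rw [← hsum, hO d]
  refine le_antisymm (le_min ?_ ?_) (Finset.le_inf fun t _ => ?_)
  · simpa [hd] using inf_le (f := fun t => actA n lam0 a (d t • xi t)) (mem_univ j)
  · simpa [hd, hjj'.symm] using inf_le (f := fun t => actA n lam0 a (d t • xi t)) (mem_univ j')
  · rw [hd]
    split_ifs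
    exacts [min_le_left _ _, min_le_right _ _, by simp]

lemma IsOrthogonalFamily.actA_ne_actA_add (hO : IsOrthogonalFamily n lam0 a xi)
    (hlam0 : 0 < lam0) (hinj : Function.Injective fun p : Fin n × ℤ => a p.1 + lam0 * p.2)
    (hne : ∀ j, xi j ≠ 0) {j j' : ι} (hjj' : j ≠ j') (k : ℤ) :
    actA n lam0 a (xi j) ≠ actA n lam0 a (xi j') + ((lam0 * k : ℝ) : WithTop ℝ) := by
  intro hk
  set qk : Lam := HahnSeries.single k 1
  have hshift : actA n lam0 a (xi j) = actA n lam0 a (qk • xi j') := by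
    rw [actA_smul (HahnSeries.single_ne_zero one_ne_zero), HahnSeries.order_single one_ne_zero, hk]
  have hlt := actA_lt_actA_add_of_eq hlam0 hinj (hne j) hshift
  rw [← one_smul Lam (xi j), hO.actA_smul_add_smul hjj', one_smul, ← hshift, min_self] at hlt
  exact lt_irrefl _ hlt

lemma isOrthogonalFamily_of_actA_ne_actA_add (hlam0 : 0 ≤ lam0)
    (hd : ∀ j j' : ι, j ≠ j' → ∀ k : ℤ,
      actA n lam0 a (xi j) ≠ actA n lam0 a (xi j') + ((lam0 * k : ℝ) : WithTop ℝ)) :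
    IsOrthogonalFamily n lam0 a xi := by
  intro c
  refine actA_sum_eq_inf hlam0 univ _ fun j _ j' _ hjj' heq => ?_
  by_contra hj
  have hcj : c j ≠ 0 := by
    rintro h0
    simp [h0] at hj
  have hcj' : c j' ≠ 0 := by
    rintro h0
    rw [h0, zero_smul, actA_zero, actA_eq_top_iff] at heq
    exact hj heq
  rw [actA_smul hcj, actA_smul hcj'] at heq
  apply hd j j' hjj' ((c j').order - (c j).order)
  rw [WithTop.eq_add_coe_sub_of_add_coe_eq heq]
  congr 2
  push_cast
  ring

end actA

/-- If all capped orbits have pairwise distinct actions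
(`a i - a j ∉ λ₀·ℤ` for `i ≠ j`), then a finite family of nonzero vectors of `C` is
orthogonal iff the actions `A (ξ j)` are pairwise distinct modulo `λ₀·ℤ`. -/
theorem orthogonal_iff_actions_distinct (n : ℕ) (lam0 : ℝ) (hlam0 : 0 < lam0) (a : Fin n → ℝ)
    (hdist : ∀ i j : Fin n, i ≠ j → ∀ k : ℤ, a i - a j ≠ lam0 * k)
    {ι : Type} [Fintype ι] (xi : ι → (Fin n → Lam)) (hne : ∀ j, xi j ≠ 0) :
    IsOrthogonalFamily n lam0 a xi ↔
      ∀ j j' : ι, j ≠ j' → ∀ k : ℤ,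
        actA n lam0 a (xi j) ≠ actA n lam0 a (xi j') + ((lam0 * k : ℝ) : WithTop ℝ) :=
  ⟨fun hO _ _ hjj' => hO.actA_ne_actA_add hlam0 (cappedAction_injective hlam0.ne' hdist) hne hjj',
    isOrthogonalFamily_of_actA_ne_actA_add hlam0.le⟩
end

section
/- Let d : C → C be a nonzero Λ-linear map. Then the infimum of A(ȳ) − A(x̄) over all pairs of capped orbits x̄, ȳ with ⟨d x̄, ȳ⟩ = 1 equals the infimum of A(d ξ) − A(ξ) over all ξ ∈ C with d ξ ≠ 0 (both sets of real numbers are nonempty and bounded below, and the infima are taken in ℝ). -/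
/-! Write `D j i` for the `j`-th component of `d eᵢ`. Every arrow `q^k eᵢ → q^l eⱼ` has length
at least `a j - a i + λ₀ ord (D j i)`, which is itself the length of an arrow, so a shortest arrow,
of length `M`, exists. Since `(d ξ)ⱼ = ∑ᵢ ξᵢ D j i`, the leading term of each component of `d ξ`
comes from an arrow starting at the leading term of some `ξᵢ`, whence `A (d ξ) ≥ A ξ + M`, with
equality for `ξ = eᵢ` when `i` is the source of a shortest arrow. -/

lemma LinearMap.apply_pi_eq_sum_mul {R ι κ : Type*} [CommSemiring R] [Fintype ι] [DecidableEq ι]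
    (f : (ι → R) →ₗ[R] κ → R) (x : ι → R) (j : κ) :
    f x j = ∑ i, x i * f (Pi.single i 1) j := by
  rw [← LinearMap.toMatrix'_mulVec f x]
  simp [Matrix.mulVec, dotProduct, LinearMap.toMatrix'_apply, mul_comm]

lemma LinearMap.exists_apply_single_ne_zero {R ι κ : Type*} [CommSemiring R] [Fintype ι]
    [DecidableEq ι] {f : (ι → R) →ₗ[R] κ → R} (hf : f ≠ 0) :
    ∃ i j, f (Pi.single i 1) j ≠ 0 := by
  by_contra! h
  exact hf <| (Pi.basisFun R ι).ext fun i => by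
    rw [Pi.basisFun_apply, LinearMap.zero_apply]; exact funext (h i)

lemma HahnSeries.exists_ne_zero_order_le_order_sum {Γ R ι : Type*} [LinearOrder Γ] [Zero Γ]
    [AddCommMonoid R] {s : Finset ι} {f : ι → HahnSeries Γ R} (hf : ∑ i ∈ s, f i ≠ 0) :
    ∃ i ∈ s, f i ≠ 0 ∧ (f i).order ≤ (∑ i ∈ s, f i).order := by
  have hcoeff : ∑ i ∈ s, (f i).coeff (∑ i ∈ s, f i).order ≠ 0 := by
    rwa [← HahnSeries.coeff_sum, Ne, HahnSeries.coeff_order_eq_zero]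
  obtain ⟨i, hi, hne⟩ := Finset.exists_ne_zero_of_sum_ne_zero hcoeff
  exact ⟨i, hi, fun h => hne (by simp [h]), HahnSeries.order_le_of_coeff_ne_zero hne⟩

lemma ZMod.mod_two_eq_one_iff_ne_zero {x : ZMod 2} : x = 1 ↔ x ≠ 0 := by
  revert x; decide

section Action

variable {n : ℕ} {lam0 : ℝ} {a : Fin n → ℝ} {xi : Fin n → Lam}

lemma actA_le_of_ne_zero {i : Fin n} (hi : xi i ≠ 0) :
    actA n lam0 a xi ≤ ((a i + lam0 * (xi i).order : ℝ) : WithTop ℝ) :=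
  (Finset.inf_le (Finset.mem_univ i)).trans_eq (if_neg hi)

lemma le_actA {c : WithTop ℝ}
    (h : ∀ i, xi i ≠ 0 → c ≤ ((a i + lam0 * (xi i).order : ℝ) : WithTop ℝ)) :
    c ≤ actA n lam0 a xi := by
  refine Finset.le_inf fun i _ => ?_
  split_ifs with hi
  · exact le_top
  · exact h i hi

lemma actA_ne_top (hxi : xi ≠ 0) : actA n lam0 a xi ≠ ⊤ := by
  obtain ⟨i, hi⟩ := Function.ne_iff.mp hxi
  exact ne_top_of_le_ne_top WithTop.coe_ne_top (actA_le_of_ne_zero hi)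

lemma actA_single_one (i : Fin n) : actA n lam0 a (Pi.single i 1) = a i := by
  refine le_antisymm ?_ (le_actA fun j hj => ?_)
  · simpa using actA_le_of_ne_zero (lam0 := lam0) (a := a) (xi := Pi.single i 1) (i := i)
  · obtain rfl : j = i := by by_contra h; exact hj (Pi.single_eq_of_ne h 1)
    simp

end Action

section Arrows

variable {n : ℕ} {lam0 : ℝ} {a : Fin n → ℝ} {d : (Fin n → Lam) →ₗ[Lam] (Fin n → Lam)}

lemma mem_arrowLengths_iff {t : ℝ} :
    t ∈ arrowLengths n lam0 a d ↔
      ∃ (i j : Fin n) (m : ℤ), (d (Pi.single i 1) j).coeff m ≠ 0 ∧ t = a j - a i + lam0 * m := by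
  constructor
  · rintro ⟨i, j, k, l, hpair, rfl⟩
    refine ⟨i, j, l - k, ZMod.mod_two_eq_one_iff_ne_zero.mp hpair, ?_⟩
    push_cast
    ring
  · rintro ⟨i, j, m, hm, rfl⟩
    refine ⟨i, j, 0, m, ZMod.mod_two_eq_one_iff_ne_zero.mpr (by simpa [pairing] using hm), ?_⟩
    push_cast
    ring

lemma exists_isLeast_arrowLengths (hlam0 : 0 ≤ lam0) (hd : d ≠ 0) :
    ∃ M, IsLeast (arrowLengths n lam0 a d) M := by
  classical
  let entries := Finset.univ.filter fun p : Fin n × Fin n => d (Pi.single p.1 1) p.2 ≠ 0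
  let len (p : Fin n × Fin n) : ℝ := a p.2 - a p.1 + lam0 * (d (Pi.single p.1 1) p.2).order
  obtain ⟨i, j, hij⟩ := LinearMap.exists_apply_single_ne_zero hd
  obtain ⟨p, hp, hp_min⟩ :=
    entries.exists_min_image len ⟨(i, j), Finset.mem_filter.mpr ⟨Finset.mem_univ _, hij⟩⟩
  refine ⟨len p, mem_arrowLengths_iff.mpr ⟨p.1, p.2, _, ?_, rfl⟩, ?_⟩
  · exact HahnSeries.coeff_order_eq_zero.not.mpr (Finset.mem_filter.mp hp).2
  · rintro t ht
    obtain ⟨i, j, m, hm, rfl⟩ := mem_arrowLengths_iff.mp ht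
    have hij : d (Pi.single i 1) j ≠ 0 := fun h => hm (by simp [h])
    have hord : ((d (Pi.single i 1) j).order : ℝ) ≤ m :=
      mod_cast HahnSeries.order_le_of_coeff_ne_zero hm
    calc len p ≤ len (i, j) := hp_min _ (Finset.mem_filter.mpr ⟨Finset.mem_univ _, hij⟩)
      _ ≤ a j - a i + lam0 * m := by dsimp only [len]; gcongr

lemma actA_add_le_actA_apply (hlam0 : 0 ≤ lam0) {M : ℝ}
    (hM : M ∈ lowerBounds (arrowLengths n lam0 a d)) (xi : Fin n → Lam) :
    actA n lam0 a xi + M ≤ actA n lam0 a (d xi) := by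
  refine le_actA fun j hj => ?_
  rw [LinearMap.apply_pi_eq_sum_mul] at hj ⊢
  obtain ⟨i, -, hprod, hle⟩ := HahnSeries.exists_ne_zero_order_le_order_sum hj
  have hxi : xi i ≠ 0 := left_ne_zero_of_mul hprod
  have hentry : d (Pi.single i 1) j ≠ 0 := right_ne_zero_of_mul hprod
  rw [HahnSeries.order_mul hxi hentry] at hle
  -- the arrow from `q ^ ord (ξ i) • eᵢ` to the leading term of `ξ i • d eᵢ` at `eⱼ`
  have harrow : M ≤ a j - a i + lam0 * (d (Pi.single i 1) j).order :=
    hM (mem_arrowLengths_iff.mpr ⟨i, j, _, HahnSeries.coeff_order_eq_zero.not.mpr hentry, rfl⟩)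
  have hle' : ((xi i).order + (d (Pi.single i 1) j).order : ℝ) ≤
      (∑ i, xi i * d (Pi.single i 1) j).order := mod_cast hle
  calc actA n lam0 a xi + M ≤ ((a i + lam0 * (xi i).order : ℝ) : WithTop ℝ) + M := by
        gcongr; exact actA_le_of_ne_zero hxi
    _ ≤ _ := by
        rw [← WithTop.coe_add, WithTop.coe_le_coe]
        nlinarith

lemma isLeast_actionGaps_of_isLeast_arrowLengths (hlam0 : 0 ≤ lam0) {M : ℝ}
    (hM : IsLeast (arrowLengths n lam0 a d) M) :
    IsLeast (actionGaps n lam0 a d) M := by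
  refine ⟨?_, ?_⟩
  · obtain ⟨i, j, m, hm, hMeq⟩ := mem_arrowLengths_iff.mp hM.1
    have hentry : d (Pi.single i 1) j ≠ 0 := fun h => hm (by simp [h])
    have hord : ((d (Pi.single i 1) j).order : ℝ) ≤ m :=
      mod_cast HahnSeries.order_le_of_coeff_ne_zero hm
    refine ⟨Pi.single i 1, Function.ne_iff.mpr ⟨j, hentry⟩, ?_⟩
    rw [actA_single_one, ← WithTop.coe_add]
    refine le_antisymm ((actA_le_of_ne_zero hentry).trans (WithTop.coe_le_coe.mpr ?_)) ?_
    · rw [hMeq]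
      nlinarith
    · simpa [actA_single_one] using actA_add_le_actA_apply hlam0 hM.2 (Pi.single i 1)
  · rintro t ⟨xi, hdxi, hgap⟩
    have hxi : xi ≠ 0 := fun h => hdxi (by rw [h, map_zero])
    have hle := actA_add_le_actA_apply hlam0 hM.2 xi
    rw [hgap] at hle
    lift actA n lam0 a xi to ℝ using actA_ne_top hxi with u
    rw [← WithTop.coe_add, ← WithTop.coe_add, WithTop.coe_le_coe] at hle
    linarith

end Arrows

/-- For a nonzero `Λ`-linear map `d : C → C`, the infimum of
`A ȳ - A x̄` over pairs of capped orbits with `⟨d x̄, ȳ⟩ = 1` equals the infimum of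
`A (d ξ) - A ξ` over `ξ` with `d ξ ≠ 0`; both sets are nonempty and bounded below. -/
theorem sInf_arrowLengths_eq_sInf_actionGaps (n : ℕ) (lam0 : ℝ) (hlam0 : 0 < lam0)
    (a : Fin n → ℝ) (d : (Fin n → Lam) →ₗ[Lam] (Fin n → Lam)) (hd : d ≠ 0) :
    (arrowLengths n lam0 a d).Nonempty ∧ BddBelow (arrowLengths n lam0 a d) ∧
    (actionGaps n lam0 a d).Nonempty ∧ BddBelow (actionGaps n lam0 a d) ∧
    sInf (arrowLengths n lam0 a d) = sInf (actionGaps n lam0 a d) := by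
  obtain ⟨M, hArrow⟩ := exists_isLeast_arrowLengths hlam0.le hd
  have hGap := isLeast_actionGaps_of_isLeast_arrowLengths hlam0.le hArrow
  exact ⟨hArrow.nonempty, hArrow.bddBelow, hGap.nonempty, hGap.bddBelow,
    hArrow.csInf_eq.trans hGap.csInf_eq.symm⟩
end

section
/- Let R be a commutative ring and N a module over the polynomial ring R[X]. Suppose N is the internal direct sum of a family (N_i)_{i ∈ ℤ} of R-submodules such that X • N_i ⊆ N_{i+1} for every i ∈ ℤ. Then multiplication by the scalar 1 + X is injective on N. -/
/-!
If `v + f v = 0` with `v ≠ 0`, look at the homogeneous component of `v` of lowest degree `b`.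
Since `f` raises degrees by one, `f v` has no component in degree `b`, so the degree-`b`
component of `v + f v` is that of `v`, which is nonzero.
-/

namespace DirectSum

variable {M S : Type*} [AddCommGroup M] [SetLike S M] [AddSubmonoidClass S M]
  {A : ℤ → S} [Decomposition A]

theorem decompose_map_succ_apply {f : M →+ M} (hf : ∀ i, ∀ x ∈ A i, f x ∈ A (i + 1))
    (v : M) (j : ℤ) : (decompose A (f v) (j + 1) : M) = f (decompose A v j) := by
  induction v using Decomposition.inductionOn A with
  | zero => simp
  | @homogeneous i x =>
    by_cases hij : i = j
    · subst hij
      rw [decompose_of_mem_same A (hf i x x.2), decompose_coe, of_eq_same]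
    · rw [decompose_of_mem_ne A (hf i x x.2) (by omega), decompose_coe,
        of_eq_of_ne _ _ _ (Ne.symm hij), ZeroMemClass.coe_zero, map_zero]
  | add v w hv hw => simp only [map_add, decompose_add, add_apply, AddMemClass.coe_add, hv, hw]

theorem injective_add_map_of_mapsTo_succ {f : M →+ M}
    (hf : ∀ i, ∀ x ∈ A i, f x ∈ A (i + 1)) : Function.Injective (fun v => v + f v) := by
  classical
  refine (injective_iff_map_eq_zero (AddMonoidHom.id M + f)).2 fun v hv => ?_
  by_contra hv0
  have hsupp : (decompose A v).support.Nonempty := by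
    rw [Finset.nonempty_iff_ne_empty, Ne, DFinsupp.support_eq_empty, ← decompose_zero,
      (decompose A).injective.eq_iff]
    exact hv0
  set b := (decompose A v).support.min' hsupp
  have hbelow : decompose A v (b - 1) = 0 :=
    DFinsupp.notMem_support_iff.1 fun h => by
      have := Finset.min'_le _ _ h
      omega
  have hb : (decompose A (v + f v) b : M) = decompose A v b := by
    have := decompose_map_succ_apply hf v (b - 1)
    rw [sub_add_cancel, hbelow, ZeroMemClass.coe_zero, map_zero] at this
    rw [decompose_add, add_apply, AddMemClass.coe_add, this, add_zero]
  have hv' : v + f v = 0 := hv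
  rw [hv', decompose_zero, zero_apply, ZeroMemClass.coe_zero, eq_comm,
    ZeroMemClass.coe_eq_zero] at hb
  exact DFinsupp.mem_support_iff.1 (Finset.min'_mem _ hsupp) hb

end DirectSum

theorem one_add_X_smul_injective_general (R : Type*) [CommRing R] (N : Type*) [AddCommGroup N]
    [Module (Polynomial R) N] [Module R N]
    (Ni : ℤ → Submodule R N)
    (hinternal : DirectSum.IsInternal Ni)
    (hshift : ∀ (i : ℤ), ∀ x ∈ Ni i, (Polynomial.X : Polynomial R) • x ∈ Ni (i + 1)) :
    Function.Injective (fun v : N => (1 + Polynomial.X : Polynomial R) • v) := by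
  let _ := hinternal.chooseDecomposition
  simpa only [add_smul, one_smul, DistribSMul.toAddMonoidHom_apply] using
    DirectSum.injective_add_map_of_mapsTo_succ
      (f := DistribSMul.toAddMonoidHom N (Polynomial.X : Polynomial R)) hshift

/-- Let `N` be a module over `R[X]` which is the internal direct sum of
a family `(N i)_{i ∈ ℤ}` of `R`-submodules with `X • N i ⊆ N (i + 1)`. Then
multiplication by the scalar `1 + X` is injective on `N`. -/
theorem one_add_X_smul_injective (R : Type*) [CommRing R] (N : Type*) [AddCommGroup N]
    [Module (Polynomial R) N] [Module R N] [IsScalarTower R (Polynomial R) N]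
    (Ni : ℤ → Submodule R N)
    (hinternal : DirectSum.IsInternal Ni)
    (hshift : ∀ (i : ℤ), ∀ x ∈ Ni i, (Polynomial.X : Polynomial R) • x ∈ Ni (i + 1)) :
    Function.Injective (fun v : N => (1 + Polynomial.X : Polynomial R) • v) :=
  one_add_X_smul_injective_general R N Ni hinternal hshift
end

section
/- Take R = ZMod 2 and let M be a vector space over ZMod 2. Let D be a (ZMod 2)[X]-linear endomorphism of M[X] with D ∘ D = 0, and let d̃ := ev₁ ∘ D ∘ ι : M → M. Suppose that multiplication by the scalar 1 + X is injective on the homology H(D) := ker D / im D (a (ZMod 2)[X]-module). Then there is a ZMod 2-linear isomorphism (ker d̃ / im d̃) ≅ H(D) / (1 + X)·H(D). -/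
open Polynomial PolynomialModule

/-- The homology `ker f ⧸ im f` of a linear endomorphism `f` (with `f ∘ f = 0` in the
intended applications). -/
noncomputable def LinHomology {R : Type*} [CommRing R] {N : Type*} [AddCommGroup N]
    [Module R N] (f : N →ₗ[R] N) : Type _ :=
  ↥(LinearMap.ker f) ⧸ (LinearMap.range f).comap (LinearMap.ker f).subtype

noncomputable instance {R : Type*} [CommRing R] {N : Type*} [AddCommGroup N]
    [Module R N] (f : N →ₗ[R] N) : AddCommGroup (LinHomology f) :=
  inferInstanceAs (AddCommGroup (↥(LinearMap.ker f) ⧸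
    (LinearMap.range f).comap (LinearMap.ker f).subtype))

noncomputable instance {R : Type*} [CommRing R] {N : Type*} [AddCommGroup N] [Module R N]
    {S : Type*} [Semiring S] [SMul S R] [Module S N] [IsScalarTower S R N]
    (f : N →ₗ[R] N) : Module S (LinHomology f) :=
  inferInstanceAs (Module S (↥(LinearMap.ker f) ⧸
    (LinearMap.range f).comap (LinearMap.ker f).subtype))

noncomputable instance {R : Type*} [CommRing R] {N : Type*} [AddCommGroup N] [Module R N]
    {S : Type*} [Semiring S] [SMul S R] [Module S N] [IsScalarTower S R N]
    (f : N →ₗ[R] N) : IsScalarTower S R (LinHomology f) :=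
  inferInstanceAs (IsScalarTower S R (↥(LinearMap.ker f) ⧸
    (LinearMap.range f).comap (LinearMap.ker f).subtype))

noncomputable instance {R : Type*} [CommRing R] {N : Type*} [AddCommGroup N]
    [Module R N] (f : N →ₗ[R] N) : Module R (LinHomology f) :=
  inferInstanceAs (Module R (↥(LinearMap.ker f) ⧸
    (LinearMap.range f).comap (LinearMap.ker f).subtype))

/-- The induced map `d̃ := ev₁ ∘ D ∘ ι : M → M` of a `(ZMod 2)[X]`-linear endomorphism of
`M[X]`, as a `ZMod 2`-linear map. -/
noncomputable def dTilde (M : Type*) [AddCommGroup M] [Module (ZMod 2) M]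
    (D : PolynomialModule (ZMod 2) M →ₗ[Polynomial (ZMod 2)] PolynomialModule (ZMod 2) M) :
    M →ₗ[ZMod 2] M :=
  (PolynomialModule.eval (1 : ZMod 2)) ∘ₗ (D.restrictScalars (ZMod 2)) ∘ₗ
    (PolynomialModule.lsingle (ZMod 2) 0)

/-- The quotient `H(D) ⧸ (1 + X)·H(D)` of the homology `H(D) = ker D ⧸ im D` by the image
of multiplication by the scalar `1 + X`. -/
noncomputable def HModOneAddX (M : Type*) [AddCommGroup M] [Module (ZMod 2) M]
    (D : PolynomialModule (ZMod 2) M →ₗ[Polynomial (ZMod 2)] PolynomialModule (ZMod 2) M) :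
    Type _ :=
  LinHomology D ⧸ LinearMap.range
    ((1 + Polynomial.X : Polynomial (ZMod 2)) •
      (LinearMap.id : LinHomology D →ₗ[Polynomial (ZMod 2)] LinHomology D))

noncomputable instance (M : Type*) [AddCommGroup M] [Module (ZMod 2) M]
    (D : PolynomialModule (ZMod 2) M →ₗ[Polynomial (ZMod 2)] PolynomialModule (ZMod 2) M) :
    AddCommGroup (HModOneAddX M D) :=
  inferInstanceAs (AddCommGroup (LinHomology D ⧸ LinearMap.range
    ((1 + Polynomial.X : Polynomial (ZMod 2)) •
      (LinearMap.id : LinHomology D →ₗ[Polynomial (ZMod 2)] LinHomology D))))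

noncomputable instance (M : Type*) [AddCommGroup M] [Module (ZMod 2) M]
    (D : PolynomialModule (ZMod 2) M →ₗ[Polynomial (ZMod 2)] PolynomialModule (ZMod 2) M) :
    Module (ZMod 2) (HModOneAddX M D) :=
  inferInstanceAs (Module (ZMod 2) (LinHomology D ⧸ LinearMap.range
    ((1 + Polynomial.X : Polynomial (ZMod 2)) •
      (LinearMap.id : LinHomology D →ₗ[Polynomial (ZMod 2)] LinHomology D))))

/-! Evaluation at `X = r` identifies `M[X] ⧸ (X - r)·M[X]` with `M`, and `X - r` is a
nonzerodivisor on `M[X]`. Hence evaluation intertwines `D` with `d̃` and induces a map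
`H(D) → H(d̃)` whose kernel is exactly `(X - r)·H(D)`; it is onto because a cycle of `d̃` lifts to a
cycle of `D` once `X - r` acts injectively on `H(D)`. Over `ZMod 2` one takes `r = 1`, since
`1 + X = X - 1`. -/

namespace LinHomology

variable {R N : Type*} [CommRing R] [AddCommGroup N] [Module R N] {f : N →ₗ[R] N}

noncomputable def mk (c : LinearMap.ker f) : LinHomology f := Submodule.Quotient.mk c

lemma mk_surjective : Function.Surjective (mk : LinearMap.ker f → LinHomology f) :=
  Submodule.mkQ_surjective _

lemma mk_smul (a : R) (c : LinearMap.ker f) : mk (a • c) = a • mk c := rfl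

lemma mk_eq_mk_iff {c c' : LinearMap.ker f} : mk c = mk c' ↔ (c - c' : N) ∈ LinearMap.range f :=
  Submodule.Quotient.eq _

lemma mk_eq_zero_iff {c : LinearMap.ker f} : mk c = 0 ↔ (c : N) ∈ LinearMap.range f :=
  Submodule.Quotient.mk_eq_zero _

end LinHomology

namespace PolynomialModule

variable {R M : Type*} [CommRing R] [AddCommGroup M] [Module R M]

lemma C_smul (r : R) (p : PolynomialModule R M) : C r • p = r • p :=
  algebraMap_smul R[X] r p

lemma eval_X_sub_C_smul (r : R) (p : PolynomialModule R M) : eval r ((X - C r) • p) = 0 := by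
  simp [eval_smul]

lemma eq_zero_of_X_sub_C_smul_eq_zero {r : R} {p : PolynomialModule R M}
    (h : (X - C r) • p = 0) : p = 0 := by
  -- `X` acts on `p` as `r`, so `p.coeff n = r ^ k • p.coeff (n + k)`, which vanishes for large `k`.
  have hX_pow : ∀ k, (X ^ k : R[X]) • p = C (r ^ k) • p := fun k => by
    obtain ⟨c, hc⟩ := sub_dvd_pow_sub_pow (X : R[X]) (C r) k
    rw [C_pow, ← sub_eq_zero, ← sub_smul, hc, mul_comm, mul_smul, h, smul_zero]
  ext n : 2
  obtain ⟨k, hk⟩ : ∃ k, p.coeff (n + k) = 0 := by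
    refine ⟨p.coeff.support.sup id + 1, Finsupp.notMem_support_iff.mp fun hmem => ?_⟩
    have := Finset.le_sup (f := id) hmem
    simp only [id] at this
    omega
  have := congr_arg (fun q : PolynomialModule R M => q.coeff (n + k)) (hX_pow k)
  simpa [X_pow_eq_monomial, ← monomial_zero_left, hk] using this

lemma exists_X_sub_C_smul_eq_sub_single_eval (r : R) (p : PolynomialModule R M) :
    ∃ q, (X - C r) • q = p - single R 0 (eval r p) := by
  induction p using induction_linear with
  | zero => exact ⟨0, by simp⟩
  | add p p' hp hp' =>
    obtain ⟨q, hq⟩ := hp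
    obtain ⟨q', hq'⟩ := hp'
    exact ⟨q + q', by rw [smul_add, hq, hq', map_add, single_add]; abel⟩
  | single n m =>
    obtain ⟨c, hc⟩ := sub_dvd_pow_sub_pow (X : R[X]) (C r) n
    refine ⟨c • single R 0 m, ?_⟩
    rw [smul_smul, ← hc, sub_smul, X_pow_eq_monomial, monomial_smul_single, ← C_pow, C_smul,
      eval_single, ← single_smul, one_smul, add_zero]

lemma exists_X_sub_C_smul_eq_of_eval_eq_zero {r : R} {p : PolynomialModule R M}
    (hp : eval r p = 0) : ∃ q, (X - C r) • q = p := by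
  simpa [hp] using exists_X_sub_C_smul_eq_sub_single_eval r p

variable (r : R) (D : PolynomialModule R M →ₗ[R[X]] PolynomialModule R M)

noncomputable def specialization : M →ₗ[R] M :=
  eval r ∘ₗ D.restrictScalars R ∘ₗ lsingle R 0

lemma specialization_apply (m : M) : specialization r D m = eval r (D (single R 0 m)) := rfl

lemma eval_apply_eq_specialization_eval (p : PolynomialModule R M) :
    eval r (D p) = specialization r D (eval r p) := by
  obtain ⟨q, hq⟩ := exists_X_sub_C_smul_eq_sub_single_eval r p
  conv_lhs => rw [eq_add_of_sub_eq' hq.symm, map_add, D.map_smul, map_add, eval_X_sub_C_smul,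
    add_zero]
  rfl

variable {D}

lemma eval_mem_range_specialization_iff (hD : D ∘ₗ D = 0) {c : PolynomialModule R M}
    (hc : D c = 0) :
    eval r c ∈ LinearMap.range (specialization r D) ↔
      ∃ w ∈ LinearMap.ker D, (X - C r) • w - c ∈ LinearMap.range D := by
  constructor
  · rintro ⟨m, hm⟩
    obtain ⟨w, hw⟩ := exists_X_sub_C_smul_eq_of_eval_eq_zero
      (p := c - D (single R 0 m)) (by rw [map_sub, ← specialization_apply, hm, sub_self])
    refine ⟨w, ?_, -single R 0 m, ?_⟩
    · apply eq_zero_of_X_sub_C_smul_eq_zero (r := r)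
      rw [← D.map_smul, hw, map_sub, hc, ← LinearMap.comp_apply, hD, LinearMap.zero_apply,
        sub_zero]
    · rw [hw, map_neg]; abel
  · rintro ⟨w, -, u, hu⟩
    refine ⟨-eval r u, ?_⟩
    rw [map_neg, ← eval_apply_eq_specialization_eval, hu, map_sub, eval_X_sub_C_smul, zero_sub,
      neg_neg]

lemma exists_eval_eq_of_specialization_eq_zero (hD : D ∘ₗ D = 0)
    (hinj : ∀ q ∈ LinearMap.ker D, (X - C r) • q ∈ LinearMap.range D → q ∈ LinearMap.range D)
    {m : M} (hm : specialization r D m = 0) : ∃ c ∈ LinearMap.ker D, eval r c = m := by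
  -- `D (ι m) = (X - r) q` with `q` a cycle, hence a boundary `D v`; then `ι m - (X - r) v` works.
  obtain ⟨q, hq⟩ := exists_X_sub_C_smul_eq_of_eval_eq_zero (r := r) (p := D (single R 0 m)) hm
  have hDq : D q = 0 := by
    apply eq_zero_of_X_sub_C_smul_eq_zero (r := r)
    rw [← D.map_smul, hq, ← LinearMap.comp_apply, hD, LinearMap.zero_apply]
  obtain ⟨v, hv⟩ := hinj q hDq ⟨_, hq.symm⟩
  refine ⟨single R 0 m - (X - C r) • v, ?_, ?_⟩
  · rw [LinearMap.mem_ker, map_sub, D.map_smul, hv, hq, sub_self]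
  · rw [map_sub, eval_X_sub_C_smul, sub_zero, eval_single, pow_zero, one_smul]

variable (D)

noncomputable def kerEval : LinearMap.ker D →ₗ[R] LinearMap.ker (specialization r D) :=
  (eval r ∘ₗ (LinearMap.ker D).subtype.restrictScalars R).codRestrict _ fun c => by
    rw [LinearMap.mem_ker, LinearMap.comp_apply, ← eval_apply_eq_specialization_eval]
    simp

noncomputable def homologyEval : LinHomology D →ₗ[R] LinHomology (specialization r D) :=
  Submodule.mapQ (((LinearMap.range D).comap (LinearMap.ker D).subtype).restrictScalars R)
      ((LinearMap.range (specialization r D)).comap (LinearMap.ker (specialization r D)).subtype)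
      (kerEval r D) (fun c ⟨u, hu⟩ => ⟨eval r u, by
        rw [← eval_apply_eq_specialization_eval, hu]; rfl⟩) ∘ₗ
    (Submodule.Quotient.restrictScalarsEquiv R _).symm.toLinearMap

lemma homologyEval_mk (c : LinearMap.ker D) :
    homologyEval r D (LinHomology.mk c) = LinHomology.mk (kerEval r D c) := rfl

variable {D}

lemma homologyEval_surjective (hD : D ∘ₗ D = 0)
    (hinj : Function.Injective (fun h : LinHomology D => (X - C r) • h)) :
    Function.Surjective (homologyEval r D) := by
  have hinj' : ∀ q ∈ LinearMap.ker D, (X - C r) • q ∈ LinearMap.range D →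
      q ∈ LinearMap.range D := fun q hq hyq => by
    refine (LinHomology.mk_eq_zero_iff (c := ⟨q, hq⟩)).1 (hinj ?_)
    simp only [← LinHomology.mk_smul, smul_zero]
    exact LinHomology.mk_eq_zero_iff.2 hyq
  intro x
  obtain ⟨⟨m, hm⟩, rfl⟩ := LinHomology.mk_surjective x
  obtain ⟨c, hc, hcm⟩ := exists_eval_eq_of_specialization_eq_zero r hD hinj' hm
  exact ⟨LinHomology.mk ⟨c, hc⟩, congr_arg LinHomology.mk (Subtype.ext hcm)⟩

lemma ker_homologyEval (hD : D ∘ₗ D = 0) :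
    LinearMap.ker (homologyEval r D) = (LinearMap.range
      ((X - C r) • LinearMap.id : LinHomology D →ₗ[R[X]] LinHomology D)).restrictScalars R := by
  ext x
  obtain ⟨c, rfl⟩ := LinHomology.mk_surjective x
  rw [LinearMap.mem_ker, Submodule.restrictScalars_mem, LinearMap.mem_range, homologyEval_mk,
    LinHomology.mk_eq_zero_iff]
  refine (eval_mem_range_specialization_iff r hD c.2).trans ⟨?_, ?_⟩
  · rintro ⟨w, hw, hwc⟩
    exact ⟨LinHomology.mk ⟨w, hw⟩, LinHomology.mk_eq_mk_iff.2 hwc⟩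
  · rintro ⟨h, hh⟩
    obtain ⟨⟨w, hw⟩, rfl⟩ := LinHomology.mk_surjective h
    exact ⟨w, hw, LinHomology.mk_eq_mk_iff.1 hh⟩

noncomputable def homologySpecializationEquiv (hD : D ∘ₗ D = 0)
    (hinj : Function.Injective (fun h : LinHomology D => (X - C r) • h)) :
    LinHomology (specialization r D) ≃ₗ[R] LinHomology D ⧸
      LinearMap.range ((X - C r) • LinearMap.id : LinHomology D →ₗ[R[X]] LinHomology D) :=
  (LinearMap.quotKerEquivOfSurjective _ (homologyEval_surjective r hD hinj)).symm ≪≫ₗ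
    Submodule.quotEquivOfEq _ _ (ker_homologyEval r hD) ≪≫ₗ
    Submodule.Quotient.restrictScalarsEquiv R _

end PolynomialModule

/-- Over `ZMod 2`, if multiplication by `1 + X` is injective on the
homology `H(D) = ker D ⧸ im D`, then `ker d̃ ⧸ im d̃` is `ZMod 2`-linearly isomorphic to
`H(D) ⧸ (1 + X)·H(D)`. -/
theorem homology_dTilde_iso (M : Type*) [AddCommGroup M] [Module (ZMod 2) M]
    (D : PolynomialModule (ZMod 2) M →ₗ[Polynomial (ZMod 2)] PolynomialModule (ZMod 2) M)
    (hD : D ∘ₗ D = 0)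
    (hinj : Function.Injective
      (fun h : LinHomology D => (1 + Polynomial.X : Polynomial (ZMod 2)) • h)) :
    Nonempty (LinHomology (dTilde M D) ≃ₗ[ZMod 2] HModOneAddX M D) := by
  have hX : (1 + X : (ZMod 2)[X]) = X - C 1 := by
    rw [C_1, CharTwo.sub_eq_add, add_comm]
  rw [hX] at hinj
  change Nonempty (LinHomology (specialization 1 D) ≃ₗ[ZMod 2] LinHomology D ⧸
    LinearMap.range ((1 + X : (ZMod 2)[X]) • LinearMap.id :
      LinHomology D →ₗ[(ZMod 2)[X]] LinHomology D))
  rw [hX]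
  exact ⟨homologySpecializationEquiv 1 hD hinj⟩
end

section
/- Let F be a field and H a finitely generated module over the polynomial ring F[X] on which multiplication by the scalar 1 + X is injective. Then the F-dimension of the quotient H / (1 + X)·H equals the rank of H over F[X], i.e. the dimension over the fraction field F(X) of the localization F(X) ⊗_{F[X]} H. -/
/-!
Let `T` be the torsion submodule of `H`. As `H` is finitely generated over the PID `F[X]`, the
annihilator of `T` is generated by some `g ≠ 0`, and injectivity of `f = 1 + X` on `T` forces `f`
and `g` to be coprime, so `f` acts bijectively on `T`. Reducing modulo `f` therefore identifies
`H / fH` with `Q / fQ` for the free module `Q = H / T`, which has `F`-dimension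
`deg f · rank Q = rank H`; tensoring with the fraction field also sees only `rank H`.
-/

open Polynomial TensorProduct

section QuotSMulTop

variable {R M : Type*} [CommRing R] [AddCommGroup M] [Module R M]

open scoped Pointwise in
theorem Submodule.smul_top_eq_range_smul_id (r : R) :
    r • (⊤ : Submodule R M) = LinearMap.range (r • LinearMap.id) := by
  rw [← Submodule.map_top]
  rfl

theorem QuotSMulTop.subsingleton_of_surjective {r : R}
    (h : Function.Surjective (r • · : M → M)) : Subsingleton (QuotSMulTop r M) := by
  rw [Submodule.Quotient.subsingleton_iff, Submodule.smul_top_eq_range_smul_id,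
    LinearMap.range_eq_top]
  exact h

theorem QuotSMulTop.map_bijective_of_exact {N P : Type*} [AddCommGroup N] [Module R N]
    [AddCommGroup P] [Module R P] (r : R) [Subsingleton (QuotSMulTop r N)]
    {i : N →ₗ[R] M} {p : M →ₗ[R] P} (hexact : Function.Exact i p)
    (hp : Function.Surjective p) : Function.Bijective (QuotSMulTop.map r p) := by
  refine ⟨?_, QuotSMulTop.map_surjective r hp⟩
  rw [← LinearMap.ker_eq_bot, LinearMap.exact_iff.mp (QuotSMulTop.map_exact r hexact hp)]
  exact LinearMap.range_eq_bot.mpr (Subsingleton.elim _ _)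

end QuotSMulTop

section PID

variable {R M : Type*} [CommRing R] [IsDomain R] [IsPrincipalIdealRing R]
  [AddCommGroup M] [Module R M]

theorem isCoprime_of_injective_smul {f g : R} (hg : Module.annihilator R M = Ideal.span {g})
    (hg0 : g ≠ 0) (hf : Function.Injective (f • · : M → M)) : IsCoprime f g := by
  have hgM (m : M) : g • m = 0 :=
    Module.mem_annihilator.mp (hg ▸ Ideal.mem_span_singleton_self g) m
  -- a common divisor `z` of `f` and `g = z * b` acts injectively, so `b` annihilates `M`
  refine isCoprime_of_dvd f g (fun h => hg0 h.2) fun z hz _ ⟨c, hfc⟩ ⟨b, hgb⟩ => hz ?_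
  have hb : b ∈ Module.annihilator R M := Module.mem_annihilator.mpr fun m => hf <| by
    change f • b • m = f • 0
    rw [smul_zero, hfc, smul_smul, mul_right_comm, ← hgb, mul_comm, mul_smul, hgM, smul_zero]
  obtain ⟨d, rfl⟩ := Ideal.mem_span_singleton'.mp (hg ▸ hb)
  exact .of_mul_eq_one d (mul_left_cancel₀ hg0 (by linear_combination -hgb))

theorem surjective_smul_of_injective_smul {f : R} (hM : Module.annihilator R M ≠ ⊥)
    (hf : Function.Injective (f • · : M → M)) : Function.Surjective (f • · : M → M) := by
  obtain ⟨g, hg⟩ := (IsPrincipalIdealRing.principal (Module.annihilator R M)).principal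
  have hgM (m : M) : g • m = 0 :=
    Module.mem_annihilator.mp (hg ▸ Ideal.mem_span_singleton_self g) m
  obtain ⟨u, v, huv⟩ := isCoprime_of_injective_smul hg (by rintro rfl; simp_all) hf
  intro m
  refine ⟨u • m, ?_⟩
  change f • u • m = m
  rw [smul_smul, mul_comm, eq_sub_of_add_eq huv, sub_smul, one_smul, mul_smul, hgM, smul_zero,
    sub_zero]

theorem Submodule.surjective_smul_torsion_of_injective [Module.Finite R M] {f : R}
    (hf : Function.Injective (f • · : M → M)) :
    Function.Surjective (f • · : torsion R M → torsion R M) := by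
  refine surjective_smul_of_injective_smul ?_ fun x y hxy =>
    Subtype.val_injective (hf congr(($hxy : M)))
  obtain ⟨a, ha, ha0⟩ :=
    annihilator_top_inter_nonZeroDivisors (torsion_isTorsion (R := R) (M := M))
  rw [annihilator_top] at ha
  exact (Submodule.ne_bot_iff _).mpr ⟨a, ha, nonZeroDivisors.ne_zero ha0⟩

noncomputable def QuotSMulTop.equivQuotientTorsion [Module.Finite R M] {f : R}
    (hf : Function.Injective (f • · : M → M)) :
    QuotSMulTop f M ≃ₗ[R] QuotSMulTop f (M ⧸ Submodule.torsion R M) :=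
  haveI := subsingleton_of_surjective (Submodule.surjective_smul_torsion_of_injective hf)
  .ofBijective _
    (map_bijective_of_exact f (LinearMap.exact_subtype_mkQ _) (Submodule.mkQ_surjective _))

end PID

section Polynomial

variable {F M : Type*} [Field F] [AddCommGroup M] [Module F[X] M] [Module F M]
  [IsScalarTower F F[X] M]

theorem Polynomial.finrank_quotSMulTop_of_free [Module.Free F[X] M] {f : F[X]} (hf : ¬IsUnit f) :
    Module.finrank F (QuotSMulTop f M) = f.natDegree * Module.finrank F[X] M := by
  have : Nontrivial (F[X] ⧸ Ideal.span {f}) :=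
    Ideal.Quotient.nontrivial_iff.mpr (by simpa using hf)
  calc Module.finrank F (QuotSMulTop f M)
      = Module.finrank F ((F[X] ⧸ Ideal.span {f}) ⊗[F[X]] M) :=
        ((QuotSMulTop.equivQuotTensor f M).restrictScalars F).finrank_eq
    _ = f.natDegree * Module.finrank F[X] M := by
        rw [← Module.finrank_mul_finrank F (F[X] ⧸ Ideal.span {f}), Module.finrank_baseChange,
          finrank_quotient_span_eq_natDegree]

theorem Polynomial.finrank_quotSMulTop_of_injective [Module.Finite F[X] M] {f : F[X]}
    (hf : ¬IsUnit f) (hinj : Function.Injective (f • · : M → M)) :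
    Module.finrank F (QuotSMulTop f M) = f.natDegree * Module.finrank F[X] M := by
  rw [((QuotSMulTop.equivQuotientTorsion hinj).restrictScalars F).finrank_eq,
    finrank_quotSMulTop_of_free hf, finrank_quotient_eq_of_le_torsion le_rfl]

end Polynomial

theorem finrank_fractionRing_tensorProduct (R M : Type*) [CommRing R] [AddCommGroup M]
    [Module R M] :
    Module.finrank (FractionRing R) (FractionRing R ⊗[R] M) = Module.finrank R M := by
  rw [IsFractionRing.finrank_right_eq R (FractionRing R),
    IsLocalizedModule.finrank_eq (nonZeroDivisors R) (TensorProduct.mk R (FractionRing R) M 1)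
      le_rfl]

/-- Let `F` be a field and `H` a finitely generated `F[X]`-module on
which multiplication by `1 + X` is injective. Then
`dim_F (H ⧸ (1 + X)·H) = rank_{F[X]} H := dim_{F(X)} (F(X) ⊗_{F[X]} H)`. -/
theorem finrank_quotient_eq_rank (F : Type*) [Field F] (H : Type*) [AddCommGroup H]
    [Module (Polynomial F) H] [Module F H] [IsScalarTower F (Polynomial F) H]
    [Module.Finite (Polynomial F) H]
    (hinj : Function.Injective (fun h : H => (1 + Polynomial.X : Polynomial F) • h)) :
    Module.finrank F
        (H ⧸ LinearMap.range
          ((1 + Polynomial.X : Polynomial F) • (LinearMap.id : H →ₗ[Polynomial F] H))) =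
      Module.finrank (FractionRing (Polynomial F))
        (FractionRing (Polynomial F) ⊗[Polynomial F] H) := by
  have hdeg : (1 + X : F[X]).natDegree = 1 := by
    rw [add_comm]
    exact natDegree_X_add_C 1
  have hunit : ¬IsUnit (1 + X : F[X]) := not_isUnit_of_natDegree_pos _ (hdeg ▸ one_pos)
  calc _ = Module.finrank F (QuotSMulTop (1 + X : F[X]) H) := by
        rw [← Submodule.smul_top_eq_range_smul_id]
    _ = Module.finrank F[X] H := by
        rw [finrank_quotSMulTop_of_injective hunit hinj, hdeg, one_mul]
    _ = _ := (finrank_fractionRing_tensorProduct F[X] H).symm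
end
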